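/- arXiv:math/0612758 — 2 statements merged into one kernel-verified Lean document; each statement's English description precedes it below -/
import Mathlib

section
/- Let δ > 0, c > 0, μ < 0 and set τ_-(ξ) = iδ/2 - √(c²|ξ|² + μ - δ²/4) with the principal square root. At the sphere |ξ₀| = √(|μ|)/c (where δ²/4 > c²|ξ₀|² + μ = 0), the root τ_- meets the real axis with order s = 1: there is a constant c₀ > 0 such that c₀ (|ξ| - √(|μ|)/c) ≤ Im τ_-(ξ) for all |ξ| close to √(|μ|)/c with |ξ| ≥ √(|μ|)/c. -/
open Complex

lemma cpow_half_neg (x : ℝ) (hx : x < 0) :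
    ((x : ℂ)) ^ (1/2 : ℂ) = Complex.I * Real.sqrt (-x) := by
  have hx0 : (x : ℂ) ≠ 0 := by exact_mod_cast hx.ne
  rw [Complex.cpow_def_of_ne_zero hx0]
  have hlog : Complex.log (x : ℂ) = Real.log (-x) + Real.pi * Complex.I := by
    rw [Complex.log]
    simp [Complex.arg_ofReal_of_neg hx, Complex.norm_real, abs_of_neg hx]
  rw [hlog, add_mul, Complex.exp_add]
  have h1 : Complex.exp ((Real.log (-x) : ℂ) * (1/2 : ℂ)) = (Real.sqrt (-x) : ℂ) := by
    rw [show ((Real.log (-x) : ℂ) * (1/2 : ℂ)) = ((Real.log (-x) * (1/2) : ℝ) : ℂ) by push_cast; ring,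
      ← Complex.ofReal_exp]
    congr 1
    rw [Real.sqrt_eq_rpow, Real.rpow_def_of_pos (by linarith)]
  have h2 : Complex.exp ((Real.pi : ℂ) * Complex.I * (1/2 : ℂ)) = Complex.I := by
    rw [show ((Real.pi : ℂ) * Complex.I * (1/2 : ℂ)) = ((Real.pi/2 : ℝ) : ℂ) * Complex.I by push_cast; ring,
      Complex.exp_mul_I]
    simp
  rw [h1, h2]; ring

theorem stmt_15 (n : ℕ) (c δ μ : ℝ) (hc : 0 < c) (hδ : 0 < δ) (hμ : μ < 0) :
    ∃ c₀ η : ℝ, 0 < c₀ ∧ 0 < η ∧ ∀ ξ : EuclideanSpace ℝ (Fin n),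
      Real.sqrt |μ| / c ≤ ‖ξ‖ → ‖ξ‖ ≤ Real.sqrt |μ| / c + η →
      c₀ * (‖ξ‖ - Real.sqrt |μ| / c) ≤
        (Complex.I * δ / 2 -
          ((c ^ 2 * ‖ξ‖ ^ 2 + μ - δ ^ 2 / 4 : ℝ) : ℂ) ^ (1/2 : ℂ)).im := by
  set r := Real.sqrt |μ| / c with hr
  have hμ' : (0:ℝ) < |μ| := abs_pos.mpr hμ.ne
  have hr0 : 0 < r := div_pos (Real.sqrt_pos.mpr hμ') hc
  have hcr : c ^ 2 * r ^ 2 = -μ := by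
    have h1 : Real.sqrt |μ| ^ 2 = |μ| := Real.sq_sqrt hμ'.le
    have h2 : |μ| = -μ := abs_of_neg hμ
    rw [hr]
    field_simp
    nlinarith [h1, h2]
  refine ⟨2 * c ^ 2 * r / δ, min 1 (δ ^ 2 / (8 * c ^ 2 * (2 * r + 1))), by positivity,
    lt_min one_pos (by positivity), fun ξ h1 h2 => ?_⟩
  set t := ‖ξ‖ with ht
  have he0 : 0 ≤ t - r := sub_nonneg.mpr h1
  have hη1 : t ≤ r + 1 := le_trans h2 (by simp [min_le_left])
  have hη2 : t - r ≤ δ ^ 2 / (8 * c ^ 2 * (2 * r + 1)) := by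
    have := le_trans h2 (add_le_add_right (min_le_right _ _) r)
    linarith
  have hh : c ^ 2 * t ^ 2 + μ = c ^ 2 * (t - r) * (t + r) := by linear_combination hcr
  have hden : 0 < 8 * c ^ 2 * (2 * r + 1) := by positivity
  have hhb : c ^ 2 * t ^ 2 + μ ≤ δ ^ 2 / 8 := by
    rw [hh]
    have h3 : c ^ 2 * (t - r) * (t + r) ≤ c ^ 2 * (δ ^ 2 / (8 * c ^ 2 * (2 * r + 1))) * (2 * r + 1) := by
      have htr : t + r ≤ 2 * r + 1 := by linarith
      have h0 : 0 ≤ c ^ 2 * (t - r) := mul_nonneg (sq_nonneg c) he0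
      exact mul_le_mul (mul_le_mul_of_nonneg_left hη2 (sq_nonneg c)) htr (by linarith) (by positivity)
    have h4 : c ^ 2 * (δ ^ 2 / (8 * c ^ 2 * (2 * r + 1))) * (2 * r + 1) = δ ^ 2 / 8 := by
      field_simp
    linarith [h3, h4.le]
  have hx : c ^ 2 * t ^ 2 + μ - δ ^ 2 / 4 < 0 := by nlinarith
  rw [cpow_half_neg _ hx]
  have him : (Complex.I * (δ:ℂ) / 2 -
      Complex.I * (Real.sqrt (-(c ^ 2 * t ^ 2 + μ - δ ^ 2 / 4)) : ℂ)).im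
      = δ / 2 - Real.sqrt (-(c ^ 2 * t ^ 2 + μ - δ ^ 2 / 4)) := by
    simp
  rw [him]
  have hh0 : 0 ≤ c ^ 2 * t ^ 2 + μ := by rw [hh]; positivity
  have hA : 2 * c ^ 2 * r * (t - r) ≤ c ^ 2 * t ^ 2 + μ := by
    rw [hh]; nlinarith [mul_nonneg (sq_nonneg c) (sq_nonneg (t - r))]
  have hb : 0 ≤ δ / 2 - 2 * c ^ 2 * r / δ * (t - r) := by
    have h5 : 2 * c ^ 2 * r / δ * (t - r) = 2 * c ^ 2 * r * (t - r) / δ := by ring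
    rw [sub_nonneg, h5, div_le_iff₀ hδ]
    nlinarith
  have key : Real.sqrt (-(c ^ 2 * t ^ 2 + μ - δ ^ 2 / 4)) ≤ δ / 2 - 2 * c ^ 2 * r / δ * (t - r) := by
    have hsq : -(c ^ 2 * t ^ 2 + μ - δ ^ 2 / 4) ≤ (δ / 2 - 2 * c ^ 2 * r / δ * (t - r)) ^ 2 := by
      have hexp : (δ / 2 - 2 * c ^ 2 * r / δ * (t - r)) ^ 2
          = δ ^ 2 / 4 - 2 * c ^ 2 * r * (t - r) + (2 * c ^ 2 * r / δ * (t - r)) ^ 2 := by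
        field_simp
        ring
      linarith [sq_nonneg (2 * c ^ 2 * r / δ * (t - r)), hA, hexp]
    calc Real.sqrt (-(c ^ 2 * t ^ 2 + μ - δ ^ 2 / 4))
        ≤ Real.sqrt ((δ / 2 - 2 * c ^ 2 * r / δ * (t - r)) ^ 2) := Real.sqrt_le_sqrt hsq
      _ = δ / 2 - 2 * c ^ 2 * r / δ * (t - r) := Real.sqrt_sq hb
  linarith
end

section
/- Let φ : ℝⁿ → ℝ be continuous with φ(ξ) ≥ c₀ |ξ|^s on a ball V = B(0, ε) (c₀ > 0, s > 0), let a : ℝⁿ → ℂ be bounded, and let α be a multi-index. Then there exists C such that for all t ≥ 0 and all bounded measurable g : ℝⁿ → ℂ, ∫_V e^{-φ(ξ) t} |ξ^α| |a(ξ)| |g(ξ)| dξ ≤ C (1+t)^{-(n+|α|)/s} ‖g‖_{L^∞}. -/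
/-!
On the ball, `φ ξ ≥ c₀ ‖ξ‖ ^ s` and `|ξ ^ α| ≤ ‖ξ‖ ^ |α|` dominate the integrand by
`A G e^{-c₀ ‖ξ‖^s t} ‖ξ‖^|α|`. Since `‖ξ‖ < ε` there,
`e^{-c₀ ‖ξ‖^s t} ≤ e^{c₀ ε^s} e^{-c₀ (1 + t) ‖ξ‖^s}`, and the last weight is integrable over
the whole space: the substitution `ξ = (c₀ (1 + t))^{-1/s} η` shows that its integral against
`‖ξ‖^|α|` is `(c₀ (1 + t))^{-(n + |α|)/s}` times a fixed convergent integral.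
-/

open MeasureTheory Metric Set Module Real

section

variable {E : Type*} [NormedAddCommGroup E] [NormedSpace ℝ E] [FiniteDimensional ℝ E]
  [MeasurableSpace E] [BorelSpace E] (μ : Measure E) [μ.IsAddHaarMeasure] {s : ℝ}

theorem integrable_exp_neg_mul_rpow_norm_mul_pow_norm {b : ℝ} (hs : 0 < s) (hb : 0 < b) (k : ℕ) :
    Integrable (fun x : E => exp (-(b * ‖x‖ ^ s)) * ‖x‖ ^ k) μ := by
  rcases subsingleton_or_nontrivial E with hE | hE
  · exact .of_finite
  refine (integrable_fun_norm_addHaar μ (f := fun r => exp (-(b * r ^ s)) * r ^ k)).2 ?_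
  have h := integrableOn_rpow_mul_exp_neg_mul_rpow (s := ((finrank ℝ E - 1 + k : ℕ) : ℝ))
    (neg_one_lt_zero.trans_le (Nat.cast_nonneg _)) hs hb
  refine h.congr_fun (fun r (hr : 0 < r) => ?_) measurableSet_Ioi
  dsimp only
  rw [rpow_natCast, pow_add, smul_eq_mul, neg_mul]
  ring

theorem integral_exp_neg_mul_rpow_norm_mul_pow_norm {b : ℝ} (hs : 0 < s) (hb : 0 < b) (k : ℕ) :
    ∫ x, exp (-(b * ‖x‖ ^ s)) * ‖x‖ ^ k ∂μ
      = b ^ (-(finrank ℝ E + k : ℝ) / s) * ∫ x, exp (-‖x‖ ^ s) * ‖x‖ ^ k ∂μ := by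
  set l : ℝ := b ^ (-1 / s)
  have hl : 0 < l := rpow_pos_of_pos hb _
  have hbl : b * l ^ s = 1 := by
    rw [← rpow_mul hb.le, div_mul_cancel₀ _ hs.ne', rpow_neg_one, mul_inv_cancel₀ hb.ne']
  have hscale := Measure.integral_comp_smul μ (fun x => exp (-(b * ‖x‖ ^ s)) * ‖x‖ ^ k) l
  have hcomp : ∀ x : E, exp (-(b * ‖l • x‖ ^ s)) * ‖l • x‖ ^ k
      = l ^ k * (exp (-‖x‖ ^ s) * ‖x‖ ^ k) := by
    intro x
    rw [norm_smul, norm_of_nonneg hl.le, mul_rpow hl.le (norm_nonneg x), ← mul_assoc, hbl,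
      one_mul, mul_pow]
    ring
  simp only [hcomp, integral_const_mul, smul_eq_mul,
    abs_of_pos (inv_pos.2 (pow_pos hl _))] at hscale
  have hlp : l ^ (finrank ℝ E + k) = b ^ (-(finrank ℝ E + k : ℝ) / s) := by
    rw [← rpow_natCast, ← rpow_mul hb.le]
    push_cast
    ring_nf
  rw [← hlp, pow_add, mul_assoc, hscale, ← mul_assoc, mul_inv_cancel₀ (pow_pos hl _).ne', one_mul]

theorem exists_setIntegral_ball_exp_neg_mul_rpow_norm_mul_pow_norm_le {c : ℝ} (hs : 0 < s)
    (hc : 0 < c) (k : ℕ) (ε : ℝ) :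
    ∃ C, ∀ t, 0 ≤ t → ∫ x in ball 0 ε, exp (-(c * ‖x‖ ^ s) * t) * ‖x‖ ^ k ∂μ
      ≤ C * (1 + t) ^ (-(finrank ℝ E + k : ℝ) / s) := by
  refine ⟨exp (c * ε ^ s) * c ^ (-(finrank ℝ E + k : ℝ) / s) *
    ∫ x, exp (-‖x‖ ^ s) * ‖x‖ ^ k ∂μ, fun t ht => ?_⟩
  have hct : 0 < c * (1 + t) := by positivity
  have hshift : ∀ x ∈ ball (0 : E) ε, exp (-(c * ‖x‖ ^ s) * t) * ‖x‖ ^ k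
      ≤ exp (c * ε ^ s) * (exp (-(c * (1 + t) * ‖x‖ ^ s)) * ‖x‖ ^ k) := by
    intro x hx
    have hxε : ‖x‖ ^ s ≤ ε ^ s :=
      rpow_le_rpow (norm_nonneg x) (mem_ball_zero_iff.1 hx).le hs.le
    rw [← mul_assoc, ← exp_add]
    gcongr
    nlinarith
  have hint := (integrable_exp_neg_mul_rpow_norm_mul_pow_norm μ hs hct k).const_mul
    (exp (c * ε ^ s))
  calc ∫ x in ball 0 ε, exp (-(c * ‖x‖ ^ s) * t) * ‖x‖ ^ k ∂μ
      ≤ ∫ x in ball 0 ε, exp (c * ε ^ s) * (exp (-(c * (1 + t) * ‖x‖ ^ s)) * ‖x‖ ^ k) ∂μ :=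
        integral_mono_of_nonneg (.of_forall fun x => by positivity) hint.integrableOn
          ((ae_restrict_mem measurableSet_ball).mono hshift)
    _ ≤ ∫ x, exp (c * ε ^ s) * (exp (-(c * (1 + t) * ‖x‖ ^ s)) * ‖x‖ ^ k) ∂μ :=
        setIntegral_le_integral hint (.of_forall fun x => by positivity)
    _ = _ := by
        rw [integral_const_mul, integral_exp_neg_mul_rpow_norm_mul_pow_norm μ hs hct,
          mul_rpow hc.le (by positivity)]
        ring

theorem integrableOn_ball_exp_neg_mul_rpow_norm_mul_pow_norm (hs : 0 < s) (c t : ℝ) (k : ℕ)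
    (ε : ℝ) : IntegrableOn (fun x : E => exp (-(c * ‖x‖ ^ s) * t) * ‖x‖ ^ k) (ball 0 ε) μ := by
  have : Continuous fun x : E => ‖x‖ ^ s := continuous_norm.rpow_const fun _ => .inr hs.le
  exact ((Continuous.locallyIntegrable (by fun_prop)).integrableOn_isCompact
    (isCompact_closedBall 0 ε)).mono_set ball_subset_closedBall

end

theorem EuclideanSpace.abs_prod_pow_le_norm_pow_sum {n : ℕ} (x : EuclideanSpace ℝ (Fin n))
    (α : Fin n → ℕ) : |∏ i, x i ^ α i| ≤ ‖x‖ ^ ∑ i, α i := by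
  rw [Finset.abs_prod, ← Finset.prod_pow_eq_pow_sum]
  gcongr with i
  rw [abs_pow]
  gcongr
  exact PiLp.norm_apply_le x i

theorem stmt_19_general (n : ℕ) (φ : EuclideanSpace ℝ (Fin n) → ℝ)
    (s c₀ ε : ℝ) (hs : 0 < s) (hc₀ : 0 < c₀)
    (hlow : ∀ ξ ∈ Metric.ball (0 : EuclideanSpace ℝ (Fin n)) ε, c₀ * ‖ξ‖ ^ s ≤ φ ξ)
    (a : EuclideanSpace ℝ (Fin n) → ℂ) (A : ℝ) (ha : ∀ ξ, ‖a ξ‖ ≤ A)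
    (α : Fin n → ℕ) :
    ∃ C : ℝ, ∀ t : ℝ, 0 ≤ t → ∀ g : EuclideanSpace ℝ (Fin n) → ℂ, ∀ G : ℝ,
      Measurable g → (∀ ξ, ‖g ξ‖ ≤ G) →
      ∫ ξ in Metric.ball (0 : EuclideanSpace ℝ (Fin n)) ε,
          Real.exp (-(φ ξ) * t) * |∏ i, ξ i ^ (α i)| * ‖a ξ‖ * ‖g ξ‖
        ≤ C * (1 + t) ^ (-((n : ℝ) + (∑ i, α i : ℕ)) / s) * G := by
  obtain ⟨C, hC⟩ := exists_setIntegral_ball_exp_neg_mul_rpow_norm_mul_pow_norm_le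
    (volume : Measure (EuclideanSpace ℝ (Fin n))) hs hc₀ (∑ i, α i) ε
  rw [finrank_euclideanSpace_fin] at hC
  refine ⟨C * A, fun t ht g G _ hG => ?_⟩
  have hA : 0 ≤ A := (norm_nonneg _).trans (ha 0)
  have hG0 : 0 ≤ G := (norm_nonneg _).trans (hG 0)
  have hbound : ∀ ξ ∈ ball (0 : EuclideanSpace ℝ (Fin n)) ε,
      exp (-(φ ξ) * t) * |∏ i, ξ i ^ (α i)| * ‖a ξ‖ * ‖g ξ‖
        ≤ exp (-(c₀ * ‖ξ‖ ^ s) * t) * ‖ξ‖ ^ (∑ i, α i) * A * G := by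
    intro ξ hξ
    gcongr
    · exact hlow ξ hξ
    · exact EuclideanSpace.abs_prod_pow_le_norm_pow_sum ξ α
    · exact ha ξ
    · exact hG ξ
  calc ∫ ξ in ball 0 ε, exp (-(φ ξ) * t) * |∏ i, ξ i ^ (α i)| * ‖a ξ‖ * ‖g ξ‖
      ≤ ∫ ξ in ball 0 ε, exp (-(c₀ * ‖ξ‖ ^ s) * t) * ‖ξ‖ ^ (∑ i, α i) * A * G :=
        integral_mono_of_nonneg (.of_forall fun ξ => by positivity)
          (((integrableOn_ball_exp_neg_mul_rpow_norm_mul_pow_norm volume hs c₀ t _ ε).mul_const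
            A).mul_const G)
          ((ae_restrict_mem measurableSet_ball).mono hbound)
    _ ≤ C * (1 + t) ^ (-((n : ℝ) + (∑ i, α i : ℕ)) / s) * A * G := by
        rw [integral_mul_const, integral_mul_const]
        gcongr
        exact hC t ht
    _ = C * A * (1 + t) ^ (-((n : ℝ) + (∑ i, α i : ℕ)) / s) * G := by ring

theorem stmt_19 (n : ℕ) (φ : EuclideanSpace ℝ (Fin n) → ℝ) (hφ : Continuous φ)
    (s c₀ ε : ℝ) (hs : 0 < s) (hc₀ : 0 < c₀) (hε : 0 < ε)
    (hlow : ∀ ξ ∈ Metric.ball (0 : EuclideanSpace ℝ (Fin n)) ε, c₀ * ‖ξ‖ ^ s ≤ φ ξ)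
    (a : EuclideanSpace ℝ (Fin n) → ℂ) (A : ℝ) (ha : ∀ ξ, ‖a ξ‖ ≤ A)
    (α : Fin n → ℕ) :
    ∃ C : ℝ, ∀ t : ℝ, 0 ≤ t → ∀ g : EuclideanSpace ℝ (Fin n) → ℂ, ∀ G : ℝ,
      Measurable g → (∀ ξ, ‖g ξ‖ ≤ G) →
      ∫ ξ in Metric.ball (0 : EuclideanSpace ℝ (Fin n)) ε,
          Real.exp (-(φ ξ) * t) * |∏ i, ξ i ^ (α i)| * ‖a ξ‖ * ‖g ξ‖
        ≤ C * (1 + t) ^ (-((n : ℝ) + (∑ i, α i : ℕ)) / s) * G :=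
  stmt_19_general n φ s c₀ ε hs hc₀ hlow a A ha α
end
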